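/- arXiv:1507.01191 — 2 statements merged into one kernel-verified Lean document; each statement's English description precedes it below -/
import Mathlib

section
/- Let G be a finite strategic game in which every Nash equilibrium payoff profile equals the minmax payoff profile. Then in any Nash equilibrium σ of the n-stage repeated game of G, for every non-terminal history h reached with positive probability under σ, the stage-strategy profile σ(h) is a Nash equilibrium of G. -/
/-- A mixed strategy over a finite action set. -/
def IsMixed {α : Type} [Fintype α] (σ : α → ℝ) : Prop :=
  (∀ a, 0 ≤ σ a) ∧ ∑ a, σ a = 1

/-- The pure (point-mass) strategy on action `a`. -/
def pureS {α : Type} [DecidableEq α] (a : α) : α → ℝ := fun b => if b = a then 1 else 0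

variable {N : Type} [Fintype N] [DecidableEq N] {A : N → Type}
  [∀ i, Fintype (A i)] [∀ i, DecidableEq (A i)] [∀ i, Nonempty (A i)]

/-- Expected utility of a utility function under an independent mixed strategy profile. -/
def expU (u : (∀ i, A i) → ℝ) (σ : ∀ i, A i → ℝ) : ℝ :=
  ∑ a : ∀ i, A i, (∏ i, σ i (a i)) * u a

/-- Nash equilibrium of the finite strategic game with utilities `u`. -/
def IsNash (u : N → (∀ i, A i) → ℝ) (σ : ∀ i, A i → ℝ) : Prop :=
  (∀ i, IsMixed (σ i)) ∧
  ∀ i (τ : A i → ℝ), IsMixed τ → expU (u i) (Function.update σ i τ) ≤ expU (u i) σ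

/-- `vi` is the minmax payoff of player `i`: the least payoff the other players can
force on player `i` (who best-responds with a pure action). -/
def IsMinmaxVal (u : N → (∀ i, A i) → ℝ) (i : N) (vi : ℝ) : Prop :=
  IsLeast {x : ℝ | ∃ σ : ∀ j, A j → ℝ, (∀ j, IsMixed (σ j)) ∧
    x = Finset.univ.sup' Finset.univ_nonempty
          (fun a : A i => expU (u i) (Function.update σ i (pureS a)))} vi

/-- Probability that, starting from history `h`, the play under behavioral profile `σ`
follows exactly the sequence of action profiles `l`. -/
def histProb (σ : ∀ i, List (∀ j, A j) → A i → ℝ) :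
    List (∀ i, A i) → List (∀ i, A i) → ℝ
  | _, [] => 1
  | h, a :: rest => (∏ i, σ i h (a i)) * histProb σ (h ++ [a]) rest

/-- Expected average payoff of player `i` in the `n`-stage repeated game. -/
noncomputable def avgPay (n : ℕ) (u : N → (∀ i, A i) → ℝ) (i : N)
    (σ : ∀ i, List (∀ j, A j) → A i → ℝ) : ℝ :=
  ∑ f : Fin n → (∀ i, A i), histProb σ [] (List.ofFn f) * ((∑ t, u i (f t)) / n)

/-- Nash equilibrium of the `n`-stage repeated game (behavioral strategies,
average payoffs). -/
def IsRepNash (n : ℕ) (u : N → (∀ i, A i) → ℝ)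
    (σ : ∀ i, List (∀ j, A j) → A i → ℝ) : Prop :=
  (∀ i h, IsMixed (σ i h)) ∧
  ∀ i τ, (∀ h, IsMixed (τ h)) →
    avgPay n u i (Function.update σ i τ) ≤ avgPay n u i σ

/-- Shannon entropy (base 2) of a mixed strategy, with the convention 0·log 0 = 0. -/
noncomputable def ent {α : Type} [Fintype α] (σ : α → ℝ) : ℝ :=
  ∑ a, -(σ a * Real.logb 2 (σ a))

/-- Shannon entropy of a behavioral strategy of player `i` in the `n`-stage repeated
game: the maximum over terminal histories of the summed stage entropies along the
non-terminal prefixes. -/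
noncomputable def repEnt (n : ℕ) {i : N} (σi : List (∀ j, A j) → A i → ℝ) : ℝ :=
  Finset.univ.sup' Finset.univ_nonempty
    (fun f : Fin n → (∀ i, A i) => ∑ t : Fin n, ent (σi ((List.ofFn f).take t)))

/-!
Backward induction on the number of remaining stages: at every history reached with positive
probability and with `k` stages left, each player `j` expects the total payoff `k * v j`. At such a
history `h` with `k + 1` stages left, let player `i` play any `τ` instead of `σ i h` and afterwards,
at every later history, a pure best reply to the others' current mixed actions, which earns at
least `v i` per stage. Because `h` has positive probability and `σ` is an equilibrium, this
deviation does not raise `i`'s continuation payoff at `h`, whence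
`u i (τ, σ₋ᵢ h) + k * v i ≤ u i (σ h) + k * v i`. So `σ h` is a Nash equilibrium of the stage game,
its payoff profile is `v` by hypothesis, and the induction proceeds.
-/

set_option linter.unusedSectionVars false

lemma sum_prod_eq_one_of_isMixed {ι : Type} [Fintype ι] [DecidableEq ι] {β : ι → Type}
    [∀ i, Fintype (β i)] (σ : ∀ i, β i → ℝ) (hσ : ∀ i, IsMixed (σ i)) :
    ∑ a : ∀ i, β i, ∏ i, σ i (a i) = 1 := by
  rw [← Fintype.piFinset_univ, ← Finset.prod_univ_sum]
  simp [(hσ _).2]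

lemma isMixed_pureS {α : Type} [Fintype α] [DecidableEq α] (a : α) : IsMixed (pureS a) :=
  ⟨fun b => by unfold pureS; split <;> norm_num, by simp [pureS]⟩

lemma sum_fun_fin_succ {β : Type*} [Fintype β] {k : ℕ} (Φ : (Fin (k + 1) → β) → ℝ) :
    ∑ f, Φ f = ∑ a : β, ∑ g : Fin k → β, Φ (Fin.cons a g) := by
  rw [← (Fin.consEquiv fun _ => β).sum_comp Φ, Fintype.sum_prod_type]
  rfl

lemma exists_pure_ge_of_isMinmaxVal {u : N → (∀ i, A i) → ℝ} {i : N} {vi : ℝ}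
    (hvi : IsMinmaxVal u i vi) (σ : ∀ j, A j → ℝ) (hσ : ∀ j, IsMixed (σ j)) :
    ∃ a : A i, vi ≤ expU (u i) (Function.update σ i (pureS a)) := by
  obtain ⟨a, -, ha⟩ := Finset.le_sup'_iff _ |>.mp (hvi.2 ⟨σ, hσ, rfl⟩)
  exact ⟨a, ha⟩

section RepeatedGame

variable (ui : (∀ i, A i) → ℝ) (σ σ' : ∀ i, List (∀ j, A j) → A i → ℝ)

noncomputable def contPayoff : ℕ → List (∀ i, A i) → ℝ
  | 0, _ => 0
  | k + 1, g => ∑ a : ∀ i, A i, (∏ j, σ j g (a j)) * (ui a + contPayoff k (g ++ [a]))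

lemma contPayoff_succ (k : ℕ) (g : List (∀ i, A i)) :
    contPayoff ui σ (k + 1) g =
      expU ui (fun j => σ j g) + ∑ a, (∏ j, σ j g (a j)) * contPayoff ui σ k (g ++ [a]) := by
  simp only [contPayoff, expU, mul_add, Finset.sum_add_distrib]

lemma histProb_append (l₁ l₂ g : List (∀ i, A i)) :
    histProb σ g (l₁ ++ l₂) = histProb σ g l₁ * histProb σ (g ++ l₁) l₂ := by
  induction l₁ generalizing g with
  | nil => simp [histProb]
  | cons a l₁ ih => simp [histProb, ih, mul_assoc]

lemma sum_histProb_ofFn (hσ : ∀ j g, IsMixed (σ j g)) (k : ℕ) (g : List (∀ i, A i)) :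
    ∑ f : Fin k → (∀ i, A i), histProb σ g (List.ofFn f) = 1 := by
  induction k generalizing g with
  | zero => simp [histProb]
  | succ k ih =>
    simp only [sum_fun_fin_succ, List.ofFn_succ, Fin.cons_zero, Fin.cons_succ, histProb,
      ← Finset.mul_sum, ih, mul_one]
    exact sum_prod_eq_one_of_isMixed _ (hσ · g)

lemma sum_histProb_mul_sum_eq_contPayoff (hσ : ∀ j g, IsMixed (σ j g)) (k : ℕ)
    (g : List (∀ i, A i)) :
    ∑ f : Fin k → (∀ i, A i), histProb σ g (List.ofFn f) * ∑ t, ui (f t) =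
      contPayoff ui σ k g := by
  induction k generalizing g with
  | zero => simp [contPayoff]
  | succ k ih =>
    simp only [sum_fun_fin_succ, List.ofFn_succ, Fin.cons_zero, Fin.cons_succ, histProb,
      Fin.sum_univ_succ, contPayoff]
    refine Finset.sum_congr rfl fun a _ => ?_
    simp only [mul_assoc, ← Finset.mul_sum, mul_add, Finset.sum_add_distrib, ← Finset.sum_mul,
      sum_histProb_ofFn σ hσ, ih, one_mul]

lemma avgPay_eq_contPayoff (hσ : ∀ j g, IsMixed (σ j g)) (n : ℕ) (u : N → (∀ i, A i) → ℝ)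
    (i : N) : avgPay n u i σ = contPayoff (u i) σ n [] / n := by
  rw [← sum_histProb_mul_sum_eq_contPayoff (u i) σ hσ, Finset.sum_div]
  simp only [avgPay, mul_div_assoc]

lemma contPayoff_congr {g : List (∀ i, A i)} (hg : ∀ j l, σ' j (g ++ l) = σ j (g ++ l))
    (k : ℕ) : contPayoff ui σ' k g = contPayoff ui σ k g := by
  induction k generalizing g with
  | zero => rfl
  | succ k ih =>
    have hσg : ∀ j, σ' j g = σ j g := fun j => by simpa using hg j []
    simp only [contPayoff, hσg]
    refine Finset.sum_congr rfl fun a _ => ?_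
    rw [ih fun j l => by simpa using hg j (a :: l)]

lemma add_le_contPayoff_succ {g : List (∀ i, A i)} (hσ : ∀ j, IsMixed (σ j g)) {c : ℝ} {k : ℕ}
    (hc : ∀ a, c ≤ contPayoff ui σ k (g ++ [a])) :
    expU ui (fun j => σ j g) + c ≤ contPayoff ui σ (k + 1) g := by
  rw [contPayoff_succ]
  gcongr
  calc c = ∑ a : ∀ i, A i, (∏ j, σ j g (a j)) * c := by
        rw [← Finset.sum_mul, sum_prod_eq_one_of_isMixed _ hσ, one_mul]
    _ ≤ _ := Finset.sum_le_sum fun a _ =>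
        mul_le_mul_of_nonneg_left (hc a) (Finset.prod_nonneg fun j _ => (hσ j).1 _)

lemma contPayoff_succ_of_children {g : List (∀ i, A i)} (hσ : ∀ j, IsMixed (σ j g)) {c : ℝ}
    {k : ℕ} (hc : ∀ a, ∏ j, σ j g (a j) ≠ 0 → contPayoff ui σ k (g ++ [a]) = c) :
    contPayoff ui σ (k + 1) g = expU ui (fun j => σ j g) + c := by
  rw [contPayoff_succ]
  congr 1
  calc _ = ∑ a : ∀ i, A i, (∏ j, σ j g (a j)) * c := by
        refine Finset.sum_congr rfl fun a _ => ?_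
        by_cases ha : ∏ j, σ j g (a j) = 0
        · simp [ha]
        · rw [hc a ha]
    _ = c := by rw [← Finset.sum_mul, sum_prod_eq_one_of_isMixed _ hσ, one_mul]

lemma mul_le_contPayoff_of_forall_le {P : List (∀ i, A i) → Prop}
    (hP : ∀ g a, P g → P (g ++ [a])) (hσ : ∀ j g, IsMixed (σ j g)) {c : ℝ}
    (hc : ∀ g, P g → c ≤ expU ui (fun j => σ j g)) (k : ℕ) (g : List (∀ i, A i)) (hg : P g) :
    k * c ≤ contPayoff ui σ k g := by
  induction k generalizing g with
  | zero => simp [contPayoff]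
  | succ k ih =>
    calc ((k + 1 : ℕ) : ℝ) * c = c + k * c := by push_cast; ring
      _ ≤ _ := add_le_add (hc g hg) le_rfl |>.trans
          (add_le_contPayoff_succ ui σ (hσ · g) fun a => ih _ (hP g a hg))

lemma contPayoff_sub_contPayoff_of_eqOn_not_prefix {h : List (∀ i, A i)}
    (hσ' : ∀ j g, ¬ h <+: g → σ' j g = σ j g) (m : ℕ) (d g : List (∀ i, A i))
    (hd : g ++ d = h) :
    contPayoff ui σ' (d.length + m) g - contPayoff ui σ (d.length + m) g =
      histProb σ g d * (contPayoff ui σ' m h - contPayoff ui σ m h) := by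
  induction d generalizing g with
  | nil => simp_all [histProb]
  | cons a₀ d ih =>
    have hσg : ∀ j, σ' j g = σ j g := fun j => hσ' j g fun hh => by
      have := hh.length_le; simp [← hd] at this
    have hoff : ∀ a, a ≠ a₀ → ∀ j l, σ' j (g ++ [a] ++ l) = σ j (g ++ [a] ++ l) :=
      fun a ha j l => hσ' j _ fun hh => ha <| by
        have : g ++ [a] <+: h :=
          List.prefix_of_prefix_length_le (List.prefix_append _ _) hh (by simp [← hd])
        simpa [← hd] using this
    rw [List.length_cons, Nat.add_right_comm, contPayoff, contPayoff, ← Finset.sum_sub_distrib,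
      Finset.sum_eq_single a₀]
    · simp only [hσg, ← mul_sub, add_sub_add_left_eq_sub, ih (g ++ [a₀]) (by simp [← hd]),
        histProb]
      ring
    · intro a _ ha
      simp only [hσg, contPayoff_congr ui σ σ' (hoff a ha), sub_self]
    · simp

end RepeatedGame

def deviateAt {H α : Type} [DecidableEq H] [DecidableEq α] (σi : List H → α → ℝ) (h : List H)
    (τ : α → ℝ) (br : List H → α) (g : List H) : α → ℝ :=
  if g = h then τ else if h <+: g then pureS (br g) else σi g

lemma isMixed_deviateAt {H α : Type} [DecidableEq H] [Fintype α] [DecidableEq α]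
    {σi : List H → α → ℝ} (hσi : ∀ g, IsMixed (σi g)) (h : List H) {τ : α → ℝ} (hτ : IsMixed τ)
    (br : List H → α) (g : List H) : IsMixed (deviateAt σi h τ br g) := by
  unfold deviateAt
  split_ifs
  exacts [hτ, isMixed_pureS _, hσi g]

lemma update_apply_hist (σ : ∀ i, List (∀ j, A j) → A i → ℝ) (i : N)
    (τ : List (∀ j, A j) → A i → ℝ) (g : List (∀ j, A j)) :
    (fun j => Function.update σ i τ j g) = Function.update (fun j => σ j g) i (τ g) :=
  funext fun j => Function.apply_update (fun _ x => x g) σ i τ j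

lemma isMixed_update {σ : ∀ i, List (∀ j, A j) → A i → ℝ} (hσ : ∀ j g, IsMixed (σ j g)) {i : N}
    {τ : List (∀ j, A j) → A i → ℝ} (hτ : ∀ g, IsMixed (τ g)) (j : N) (g : List (∀ j, A j)) :
    IsMixed (Function.update σ i τ j g) := by
  by_cases hj : j = i
  · subst hj; simpa using hτ g
  · simpa [hj] using hσ j g

section Equilibrium

variable {u : N → (∀ i, A i) → ℝ} {v : N → ℝ} {n : ℕ} {σ : ∀ i, List (∀ j, A j) → A i → ℝ}

lemma contPayoff_update_le_of_isRepNash (hσ : IsRepNash n u σ) {i : N}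
    {τ : List (∀ j, A j) → A i → ℝ} (hτ : ∀ g, IsMixed (τ g)) {h : List (∀ i, A i)}
    (hτh : ∀ g, ¬ h <+: g → τ g = σ i g) (hpos : 0 < histProb σ [] h) {m : ℕ}
    (hm : h.length + m = n) :
    contPayoff (u i) (Function.update σ i τ) m h ≤ contPayoff (u i) σ m h := by
  rcases Nat.eq_zero_or_pos m with rfl | hm₀
  · rfl
  have hglobal := hσ.2 i τ hτ
  rw [avgPay_eq_contPayoff _ (isMixed_update hσ.1 hτ), avgPay_eq_contPayoff _ hσ.1,
    div_le_div_iff_of_pos_right (by exact_mod_cast (by omega : 0 < n))] at hglobal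
  have hsplit := contPayoff_sub_contPayoff_of_eqOn_not_prefix (u i) σ (Function.update σ i τ)
    (fun j g hg => by
      by_cases hj : j = i
      · subst hj; simpa using hτh g hg
      · simp [hj]) m h [] rfl
  rw [List.nil_append, hm] at hsplit
  nlinarith

/-- Witnessed by the deviation `τ` at `h` followed by pure best replies to the others' current
mixed actions, each worth at least `v i`. -/
lemma add_le_contPayoff_of_isRepNash (hv : ∀ i, IsMinmaxVal u i (v i)) (hσ : IsRepNash n u σ)
    {h : List (∀ i, A i)} {k : ℕ} (hk : h.length + (k + 1) = n) (hpos : 0 < histProb σ [] h)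
    (i : N) {τ : A i → ℝ} (hτ : IsMixed τ) :
    expU (u i) (Function.update (fun j => σ j h) i τ) + k * v i ≤
      contPayoff (u i) σ (k + 1) h := by
  choose br hbr using fun g => exists_pure_ge_of_isMinmaxVal (hv i) (fun j => σ j g) (hσ.1 · g)
  set τ' := deviateAt (σ i) h τ br
  have hτ' : ∀ g, IsMixed (τ' g) := isMixed_deviateAt (hσ.1 i) h hτ br
  have hpunish : ∀ (k' : ℕ) g, h.length < g.length ∧ h <+: g →
      k' * v i ≤ contPayoff (u i) (Function.update σ i τ') k' g := by
    refine mul_le_contPayoff_of_forall_le _ _ ?_ (isMixed_update hσ.1 hτ') ?_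
    · exact fun g a ⟨hlen, hg⟩ => ⟨by simp; omega, hg.trans (List.prefix_append _ _)⟩
    · rintro g ⟨hlen, hg⟩
      have hgh : g ≠ h := by rintro rfl; omega
      simpa [update_apply_hist, τ', deviateAt, hgh, hg] using hbr g
  calc _ = expU (u i) (fun j => Function.update σ i τ' j h) + k * v i := by
        simp [update_apply_hist, τ', deviateAt]
    _ ≤ contPayoff (u i) (Function.update σ i τ') (k + 1) h :=
        add_le_contPayoff_succ _ _ (isMixed_update hσ.1 hτ' · h) fun a =>
          hpunish k _ ⟨by simp, List.prefix_append _ _⟩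
    _ ≤ _ := contPayoff_update_le_of_isRepNash hσ hτ'
        (fun g hg => by
          have hgh : g ≠ h := by rintro rfl; exact hg List.prefix_rfl
          simp [τ', deviateAt, hg, hgh])
        hpos hk

lemma isNash_and_contPayoff_succ_of_children (hv : ∀ i, IsMinmaxVal u i (v i))
    (hσ : IsRepNash n u σ)
    {h : List (∀ i, A i)} {k : ℕ} (hk : h.length + (k + 1) = n) (hpos : 0 < histProb σ [] h)
    (hchild : ∀ j a, 0 < histProb σ [] (h ++ [a]) → contPayoff (u j) σ k (h ++ [a]) = k * v j) :
    IsNash u (fun j => σ j h) ∧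
      ∀ j, contPayoff (u j) σ (k + 1) h = expU (u j) (fun j => σ j h) + k * v j := by
  have hval : ∀ j, contPayoff (u j) σ (k + 1) h = expU (u j) (fun j => σ j h) + k * v j :=
    fun j => contPayoff_succ_of_children _ _ (hσ.1 · h) fun a ha => hchild j a <| by
      rw [histProb_append]
      simpa [histProb] using
        mul_pos hpos ((Finset.prod_nonneg fun l _ => (hσ.1 l h).1 (a l)).lt_of_ne' ha)
  refine ⟨⟨fun j => hσ.1 j h, fun j τ hτ => ?_⟩, hval⟩
  have := add_le_contPayoff_of_isRepNash hv hσ hk hpos j hτ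
  rw [hval] at this
  linarith

lemma contPayoff_eq_mul_of_isRepNash (hv : ∀ i, IsMinmaxVal u i (v i))
    (hpay : ∀ σ, IsNash u σ → ∀ i, expU (u i) σ = v i) (hσ : IsRepNash n u σ) (k : ℕ)
    (h : List (∀ i, A i)) (hk : h.length + k = n) (hpos : 0 < histProb σ [] h) (j : N) :
    contPayoff (u j) σ k h = k * v j := by
  induction k generalizing h j with
  | zero => simp [contPayoff]
  | succ k ih =>
    obtain ⟨hnash, hval⟩ := isNash_and_contPayoff_succ_of_children hv hσ hk hpos
      fun j a ha => ih (h ++ [a]) (by simp; omega) ha j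
    rw [hval, hpay _ hnash]
    push_cast
    ring

end Equilibrium

theorem stmt_5 (u : N → (∀ i, A i) → ℝ) (v : N → ℝ)
    (hv : ∀ i, IsMinmaxVal u i (v i))
    -- every Nash equilibrium payoff profile of the stage game equals the minmax profile
    (hpay : ∀ σ, IsNash u σ → ∀ i, expU (u i) σ = v i)
    (n : ℕ) (σ : ∀ i, List (∀ j, A j) → A i → ℝ)
    (hσ : IsRepNash n u σ)
    (h : List (∀ i, A i)) (hlen : h.length < n)
    (hpos : 0 < histProb σ [] h) :
    IsNash u (fun i => σ i h) := by
  obtain ⟨k, hk⟩ : ∃ k, h.length + (k + 1) = n := ⟨n - h.length - 1, by omega⟩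
  exact (isNash_and_contPayoff_succ_of_children hv hσ hk hpos fun j a ha =>
    contPayoff_eq_mul_of_isRepNash hv hpay hσ k (h ++ [a]) (by simp; omega) ha j).1
end

section
/- Let G be a finite two-player zero-sum game with value v, with β > 0 the minimal entropy of a column-player minimax strategy, and let c_{ε/2} > 0 be such that any column strategy of entropy ≤ (1-ε/2)β can be exploited by the row player for expected payoff ≥ v + c_{ε/2} (one-shot exploitation constant). Then for every ε ∈ (0,1] and n ≥ 1: if σ is a behavioral strategy of the column player in the n-stage repeated game of G with total entropy at most (1-ε)βn, the row player's history-wise best-response strategy achieves expected average payoff at least v + c_{ε/2}·(1 - (1-ε)/(1-ε/2)). -/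
/-- Expected payoff in a two-player game under a mixed strategy profile. -/
def expU2 {A1 A2 : Type} [Fintype A1] [Fintype A2] (u : A1 → A2 → ℝ)
    (σ₁ : A1 → ℝ) (σ₂ : A2 → ℝ) : ℝ :=
  ∑ a, ∑ b, σ₁ a * σ₂ b * u a b

/-- Nash equilibrium of the two-player game with payoffs `u1` (row) and `u2` (column). -/
def IsNash2 {A1 A2 : Type} [Fintype A1] [Fintype A2] (u1 u2 : A1 → A2 → ℝ)
    (σ₁ : A1 → ℝ) (σ₂ : A2 → ℝ) : Prop :=
  IsMixed σ₁ ∧ IsMixed σ₂ ∧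
  (∀ τ, IsMixed τ → expU2 u1 τ σ₂ ≤ expU2 u1 σ₁ σ₂) ∧
  (∀ τ, IsMixed τ → expU2 u2 σ₁ τ ≤ expU2 u2 σ₁ σ₂)

/-- `v` is the minmax payoff of the row player: the least payoff the column player can
force on the row player (who best-responds with a pure action). -/
def RowMinmax {A1 A2 : Type} [Fintype A1] [Fintype A2] [Nonempty A1]
    (u1 : A1 → A2 → ℝ) (v : ℝ) : Prop :=
  IsLeast {x : ℝ | ∃ σ₂ : A2 → ℝ, IsMixed σ₂ ∧
    x = Finset.univ.sup' Finset.univ_nonempty (fun a₁ : A1 => ∑ b, σ₂ b * u1 a₁ b)} v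

/-- `v` is the minmax payoff of the column player. -/
def ColMinmax {A1 A2 : Type} [Fintype A1] [Fintype A2] [Nonempty A2]
    (u2 : A1 → A2 → ℝ) (v : ℝ) : Prop :=
  IsLeast {x : ℝ | ∃ σ₁ : A1 → ℝ, IsMixed σ₁ ∧
    x = Finset.univ.sup' Finset.univ_nonempty (fun a₂ : A2 => ∑ a, σ₁ a * u2 a a₂)} v

/-- Probability that, starting from history `h`, play under the behavioral profile
`(σ₁, σ₂)` follows exactly the sequence of action profiles `l`. -/
def hp2 {A1 A2 : Type} (σ₁ : List (A1 × A2) → A1 → ℝ) (σ₂ : List (A1 × A2) → A2 → ℝ) :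
    List (A1 × A2) → List (A1 × A2) → ℝ
  | _, [] => 1
  | h, a :: rest => σ₁ h a.1 * σ₂ h a.2 * hp2 σ₁ σ₂ (h ++ [a]) rest

/-- Expected average payoff (with stage payoff `u`) in the `n`-stage repeated game. -/
noncomputable def avgPay2 {A1 A2 : Type} [Fintype A1] [Fintype A2] (n : ℕ)
    (u : A1 → A2 → ℝ) (σ₁ : List (A1 × A2) → A1 → ℝ) (σ₂ : List (A1 × A2) → A2 → ℝ) : ℝ :=
  ∑ f : Fin n → A1 × A2, hp2 σ₁ σ₂ [] (List.ofFn f) * ((∑ t, u (f t).1 (f t).2) / n)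

/-- ε-Nash equilibrium of the `n`-stage repeated two-player game with stage payoffs
`u1` (row) and `u2` (column), behavioral strategies and average payoffs. -/
def IsEpsRepNash2 {A1 A2 : Type} [Fintype A1] [Fintype A2] (n : ℕ) (ε : ℝ)
    (u1 u2 : A1 → A2 → ℝ)
    (σ₁ : List (A1 × A2) → A1 → ℝ) (σ₂ : List (A1 × A2) → A2 → ℝ) : Prop :=
  (∀ h, IsMixed (σ₁ h)) ∧ (∀ h, IsMixed (σ₂ h)) ∧
  (∀ τ, (∀ h, IsMixed (τ h)) → avgPay2 n u1 τ σ₂ ≤ avgPay2 n u1 σ₁ σ₂ + ε) ∧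
  (∀ τ, (∀ h, IsMixed (τ h)) → avgPay2 n u2 σ₁ τ ≤ avgPay2 n u2 σ₁ σ₂ + ε)

/-- Nash equilibrium of the `n`-stage repeated two-player game. -/
def IsRepNash2 {A1 A2 : Type} [Fintype A1] [Fintype A2] (n : ℕ)
    (u1 u2 : A1 → A2 → ℝ)
    (σ₁ : List (A1 × A2) → A1 → ℝ) (σ₂ : List (A1 × A2) → A2 → ℝ) : Prop :=
  (∀ h, IsMixed (σ₁ h)) ∧ (∀ h, IsMixed (σ₂ h)) ∧
  (∀ τ, (∀ h, IsMixed (τ h)) → avgPay2 n u1 τ σ₂ ≤ avgPay2 n u1 σ₁ σ₂) ∧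
  (∀ τ, (∀ h, IsMixed (τ h)) → avgPay2 n u2 σ₁ τ ≤ avgPay2 n u2 σ₁ σ₂)

/-- Shannon entropy of a behavioral strategy in the `n`-stage repeated two-player game:
the maximum over terminal histories of the summed stage entropies along the prefixes. -/
noncomputable def repEnt2 {A1 A2 α : Type} [Fintype A1] [Fintype A2] [Fintype α]
    [Nonempty A1] [Nonempty A2] (n : ℕ) (σ : List (A1 × A2) → α → ℝ) : ℝ :=
  Finset.univ.sup' Finset.univ_nonempty
    (fun f : Fin n → A1 × A2 => ∑ t : Fin n, ent (σ ((List.ofFn f).take t)))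

section Aux

lemma ent_nonneg {α : Type} [Fintype α] {σ : α → ℝ} (h : IsMixed σ) : 0 ≤ ent σ := by
  apply Finset.sum_nonneg
  intro a _
  rcases eq_or_lt_of_le (h.1 a) with h0 | h0
  · simp [← h0]
  · have h1 : σ a ≤ 1 := by
      have := Finset.single_le_sum (f := σ) (fun i _ => h.1 i) (Finset.mem_univ a)
      linarith [h.2]
    have hl : Real.logb 2 (σ a) ≤ 0 :=
      Real.logb_nonpos (by norm_num) (le_of_lt h0) h1
    nlinarith

/-- Expected (unnormalized) total payoff of the row player over `k` remaining stages. -/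
noncomputable def expSum {A1 A2 : Type} [Fintype A1] [Fintype A2] (u : A1 → A2 → ℝ)
    (σ₁ : List (A1 × A2) → A1 → ℝ) (σ₂ : List (A1 × A2) → A2 → ℝ) :
    ℕ → List (A1 × A2) → ℝ
  | 0, _ => 0
  | k+1, h => ∑ a, ∑ b, σ₁ h a * σ₂ h b * (u a b + expSum u σ₁ σ₂ k (h ++ [(a, b)]))

/-- Max future entropy over `k` remaining stages from history `h`. -/
noncomputable def supS {A1 A2 : Type} [Fintype A1] [Fintype A2] [Nonempty A1] [Nonempty A2]
    (σ : List (A1 × A2) → A2 → ℝ) (k : ℕ) (h : List (A1 × A2)) : ℝ :=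
  Finset.univ.sup' Finset.univ_nonempty
    (fun f : Fin k → A1 × A2 => ∑ t : Fin k, ent (σ (h ++ (List.ofFn f).take t)))

lemma supS_zero {A1 A2 : Type} [Fintype A1] [Fintype A2] [Nonempty A1] [Nonempty A2]
    (σ : List (A1 × A2) → A2 → ℝ) (h : List (A1 × A2)) : supS σ 0 h = 0 := by
  simp [supS]

lemma supS_succ_ge {A1 A2 : Type} [Fintype A1] [Fintype A2] [Nonempty A1] [Nonempty A2]
    (σ : List (A1 × A2) → A2 → ℝ) (k : ℕ) (h : List (A1 × A2)) (x : A1 × A2) :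
    ent (σ h) + supS σ k (h ++ [x]) ≤ supS σ (k + 1) h := by
  obtain ⟨f, -, hf⟩ := Finset.exists_mem_eq_sup' (Finset.univ_nonempty)
    (fun f : Fin k → A1 × A2 => ∑ t : Fin k, ent (σ ((h ++ [x]) ++ (List.ofFn f).take t)))
  have key : ent (σ h) + supS σ k (h ++ [x])
      = ∑ t : Fin (k+1), ent (σ (h ++ (List.ofFn (Fin.cons x f)).take t)) := by
    rw [supS, hf]
    rw [Fin.sum_univ_succ]
    have hofn : List.ofFn (Fin.cons x f) = x :: List.ofFn f := by
      rw [List.ofFn_succ]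
      simp
    congr 1
    · rw [hofn]
      simp
    · apply Finset.sum_congr rfl
      intro i _
      rw [hofn]
      simp [List.take_succ_cons, List.append_assoc]
  rw [key, supS]
  have := Finset.le_sup'
    (f := fun g : Fin (k+1) → A1 × A2 => ∑ t : Fin (k+1), ent (σ (h ++ (List.ofFn g).take t)))
    (s := Finset.univ) (b := Fin.cons x f) (Finset.mem_univ _)
  exact this

/-- Splitting a sum over `Fin (k+1) → X` into first coordinate and the rest. -/
lemma sum_fn_succ_split {X : Type} [Fintype X] (k : ℕ) (F : (Fin (k+1) → X) → ℝ) :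
    (∑ f, F f) = ∑ x : X, ∑ f' : Fin k → X, F (Fin.cons x f') := by
  classical
  rw [← (Fin.consEquiv (fun _ : Fin (k+1) => X)).sum_comp F]
  rw [Fintype.sum_prod_type]
  rfl

lemma ofFn_cons' {X : Type} (k : ℕ) (x : X) (f : Fin k → X) :
    List.ofFn (Fin.cons x f) = x :: List.ofFn f := by
  rw [List.ofFn_succ]
  simp

end Aux

theorem stmt_15 {A1 A2 : Type} [Fintype A1] [Fintype A2] [Nonempty A1] [Nonempty A2]
    [DecidableEq A1]
    (u : A1 → A2 → ℝ) (v β c : ℝ) (hβ : 0 < β) (hc : 0 < c)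
    (ε : ℝ) (hε0 : 0 < ε) (hε1 : ε ≤ 1) (n : ℕ) (hn : 1 ≤ n)
    -- v is the value: both players can guarantee it
    (hrow : ∃ σ₁, IsMixed σ₁ ∧ ∀ b, v ≤ ∑ a, σ₁ a * u a b)
    (hcol : ∃ σ₂, IsMixed σ₂ ∧ ∀ a, ∑ b, σ₂ b * u a b ≤ v)
    -- one-shot exploitation: any column strategy of entropy ≤ (1-ε/2)β can be
    -- exploited by the row player's best response for at least v + c
    (hexp : ∀ σ₂ : A2 → ℝ, IsMixed σ₂ → ent σ₂ ≤ (1 - ε / 2) * β →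
      v + c ≤ Finset.univ.sup' Finset.univ_nonempty
                (fun a₁ : A1 => ∑ b, σ₂ b * u a₁ b))
    -- σ is a behavioral column strategy of total entropy at most (1-ε)βn
    (σ : List (A1 × A2) → A2 → ℝ) (hσ : ∀ h, IsMixed (σ h))
    (hent : repEnt2 n σ ≤ (1 - ε) * β * n)
    -- ρ plays, at every history, a pure best response to the column stage strategy
    (ρ : List (A1 × A2) → A1 → ℝ)
    (hρ : ∀ h, ∃ a : A1, ρ h = pureS a ∧
      ∀ a' : A1, ∑ b, σ h b * u a' b ≤ ∑ b, σ h b * u a b) :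
    v + c * (1 - (1 - ε) / (1 - ε / 2)) ≤ avgPay2 n u ρ σ := by
  classical
  obtain ⟨σ₁, hσ₁m, hσ₁⟩ := hrow
  have hε2 : (0:ℝ) < 1 - ε / 2 := by linarith
  set γ : ℝ := (1 - ε / 2) * β with hγdef
  have hγ : 0 < γ := mul_pos hε2 hβ
  -- row player's pure best response secures at least the stage sup
  have hρm : ∀ h, IsMixed (ρ h) := by
    intro h
    obtain ⟨a₀, h1, -⟩ := hρ h
    rw [h1]
    constructor
    · intro a
      by_cases ha : a = a₀ <;> simp [pureS, ha]
    · simp [pureS]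
  -- row can secure v at every stage
  have hsupv : ∀ h : List (A1 × A2),
      v ≤ Finset.univ.sup' Finset.univ_nonempty (fun a₁ : A1 => ∑ b, σ h b * u a₁ b) := by
    intro h
    have e1 : ∑ a, σ₁ a * ∑ b, σ h b * u a b = ∑ b, σ h b * ∑ a, σ₁ a * u a b := by
      simp only [Finset.mul_sum]
      rw [Finset.sum_comm]
      exact Finset.sum_congr rfl fun b _ => Finset.sum_congr rfl fun a _ => by ring
    have h1 : v ≤ ∑ a, σ₁ a * ∑ b, σ h b * u a b := by
      calc v = ∑ b, σ h b * v := by rw [← Finset.sum_mul, (hσ h).2, one_mul]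
        _ ≤ ∑ b, σ h b * ∑ a, σ₁ a * u a b :=
          Finset.sum_le_sum fun b _ => mul_le_mul_of_nonneg_left (hσ₁ b) ((hσ h).1 b)
        _ = ∑ a, σ₁ a * ∑ b, σ h b * u a b := e1.symm
    calc v ≤ ∑ a, σ₁ a * ∑ b, σ h b * u a b := h1
      _ ≤ ∑ a, σ₁ a * Finset.univ.sup' Finset.univ_nonempty
            (fun a₁ : A1 => ∑ b, σ h b * u a₁ b) := by
          apply Finset.sum_le_sum
          intro a _
          exact mul_le_mul_of_nonneg_left
            (Finset.le_sup' (f := fun a₁ : A1 => ∑ b, σ h b * u a₁ b) (Finset.mem_univ a))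
            (hσ₁m.1 a)
      _ = _ := by rw [← Finset.sum_mul, hσ₁m.2, one_mul]
  -- main induction: lower bound on expected total payoff
  have main : ∀ k : ℕ, ∀ h : List (A1 × A2),
      v * (k : ℝ) + c * ((k : ℝ) - supS σ k h / γ) ≤ expSum u ρ σ k h := by
    intro k
    induction k with
    | zero =>
      intro h
      simp [expSum, supS_zero]
    | succ k ih =>
      intro h
      obtain ⟨a₀, hρh, hbr⟩ := hρ h
      have hsup_le : Finset.univ.sup' Finset.univ_nonempty
          (fun a₁ : A1 => ∑ b, σ h b * u a₁ b) ≤ ∑ b, σ h b * u a₀ b :=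
        Finset.sup'_le _ _ fun a' _ => hbr a'
      -- unfold one stage of expSum
      have hE : expSum u ρ σ (k+1) h
          = (∑ b, σ h b * u a₀ b) + ∑ b, σ h b * expSum u ρ σ k (h ++ [(a₀, b)]) := by
        show (∑ a, ∑ b, ρ h a * σ h b * (u a b + expSum u ρ σ k (h ++ [(a, b)]))) = _
        rw [hρh]
        have step : ∀ a : A1,
            (∑ b, pureS a₀ a * σ h b * (u a b + expSum u ρ σ k (h ++ [(a, b)])))
            = if a = a₀ then ∑ b, σ h b * (u a b + expSum u ρ σ k (h ++ [(a, b)])) else 0 := by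
          intro a
          by_cases ha : a = a₀ <;> simp [pureS, ha]
        rw [Finset.sum_congr rfl fun a _ => step a, Finset.sum_ite_eq' Finset.univ a₀]
        simp only [Finset.mem_univ, if_true]
        simp only [mul_add]
        rw [Finset.sum_add_distrib]
      have hent0 : 0 ≤ ent (σ h) := ent_nonneg (hσ h)
      -- continuation bound
      have h2 : ∀ b : A2,
          v * (k : ℝ) + c * ((k : ℝ) - (supS σ (k+1) h - ent (σ h)) / γ)
            ≤ expSum u ρ σ k (h ++ [(a₀, b)]) := by
        intro b
        refine le_trans ?_ (ih (h ++ [(a₀, b)]))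
        have hge := supS_succ_ge σ k h (a₀, b)
        have hd : supS σ k (h ++ [(a₀, b)]) ≤ supS σ (k+1) h - ent (σ h) := by linarith
        have hq : supS σ k (h ++ [(a₀, b)]) / γ ≤ (supS σ (k+1) h - ent (σ h)) / γ := by
          gcongr
        nlinarith [mul_le_mul_of_nonneg_left hq hc.le]
      have hsum2 : v * (k : ℝ) + c * ((k : ℝ) - (supS σ (k+1) h - ent (σ h)) / γ)
          ≤ ∑ b, σ h b * expSum u ρ σ k (h ++ [(a₀, b)]) := by
        calc v * (k : ℝ) + c * ((k : ℝ) - (supS σ (k+1) h - ent (σ h)) / γ)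
            = ∑ b, σ h b * (v * (k : ℝ) + c * ((k : ℝ) - (supS σ (k+1) h - ent (σ h)) / γ)) := by
              rw [← Finset.sum_mul, (hσ h).2, one_mul]
          _ ≤ ∑ b, σ h b * expSum u ρ σ k (h ++ [(a₀, b)]) :=
              Finset.sum_le_sum fun b _ => mul_le_mul_of_nonneg_left (h2 b) ((hσ h).1 b)
      rw [hE]
      set D := supS σ (k+1) h with hD
      set e := ent (σ h) with he
      by_cases hel : e ≤ γ
      · -- low-entropy stage: exploit for v + c
        have h1 : v + c ≤ ∑ b, σ h b * u a₀ b :=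
          le_trans (hexp (σ h) (hσ h) (by rw [hγdef] at hel; exact hel)) hsup_le
        have hq2 : (D - e) / γ ≤ D / γ := by
          gcongr
          linarith
        have := mul_le_mul_of_nonneg_left hq2 hc.le
        push_cast
        linarith
      · -- high-entropy stage: just get v
        have h1 : v ≤ ∑ b, σ h b * u a₀ b := le_trans (hsupv h) hsup_le
        push_neg at hel
        have hYX : 1 ≤ D / γ - (D - e) / γ := by
          rw [div_sub_div_same]
          have : D - (D - e) = e := by ring
          rw [this]
          rw [le_div_iff₀ hγ]
          linarith
        have := mul_le_mul_of_nonneg_left hYX hc.le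
        push_cast
        nlinarith
  -- probabilities sum to one
  have hsum1 : ∀ k : ℕ, ∀ h : List (A1 × A2),
      (∑ f : Fin k → A1 × A2, hp2 ρ σ h (List.ofFn f)) = 1 := by
    intro k
    induction k with
    | zero =>
      intro h
      simp [hp2]
    | succ k ih =>
      intro h
      rw [sum_fn_succ_split]
      have step : ∀ x : A1 × A2,
          (∑ f' : Fin k → A1 × A2, hp2 ρ σ h (List.ofFn (Fin.cons x f')))
          = ρ h x.1 * σ h x.2 := by
        intro x
        have : ∀ f' : Fin k → A1 × A2, hp2 ρ σ h (List.ofFn (Fin.cons x f'))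
            = ρ h x.1 * σ h x.2 * hp2 ρ σ (h ++ [x]) (List.ofFn f') := by
          intro f'
          rw [ofFn_cons']
          rfl
        rw [Finset.sum_congr rfl fun f' _ => this f', ← Finset.mul_sum, ih, mul_one]
      rw [Finset.sum_congr rfl fun x _ => step x, Fintype.sum_prod_type]
      simp only [← Finset.mul_sum]
      rw [← Finset.sum_mul, (hρm h).2]
      simp only [one_mul]
      exact (hσ h).2
  -- expSum equals the expectation of the total payoff
  have hexpeq : ∀ k : ℕ, ∀ h : List (A1 × A2),
      expSum u ρ σ k h
        = ∑ f : Fin k → A1 × A2, hp2 ρ σ h (List.ofFn f) * ∑ t, u (f t).1 (f t).2 := by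
    intro k
    induction k with
    | zero =>
      intro h
      simp [expSum, hp2]
    | succ k ih =>
      intro h
      rw [sum_fn_succ_split]
      have step : ∀ x : A1 × A2,
          (∑ f' : Fin k → A1 × A2, hp2 ρ σ h (List.ofFn (Fin.cons x f'))
            * ∑ t, u ((Fin.cons x f' : Fin (k+1) → A1 × A2) t).1
                ((Fin.cons x f' : Fin (k+1) → A1 × A2) t).2)
          = ρ h x.1 * σ h x.2 * (u x.1 x.2 + expSum u ρ σ k (h ++ [x])) := by
        intro x
        have e1 : ∀ f' : Fin k → A1 × A2,
            hp2 ρ σ h (List.ofFn (Fin.cons x f'))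
              * ∑ t, u ((Fin.cons x f' : Fin (k+1) → A1 × A2) t).1
                ((Fin.cons x f' : Fin (k+1) → A1 × A2) t).2
            = ρ h x.1 * σ h x.2 * (hp2 ρ σ (h ++ [x]) (List.ofFn f')
                * (u x.1 x.2 + ∑ t : Fin k, u (f' t).1 (f' t).2)) := by
          intro f'
          rw [ofFn_cons', Fin.sum_univ_succ]
          simp only [Fin.cons_zero, Fin.cons_succ]
          show (ρ h x.1 * σ h x.2 * hp2 ρ σ (h ++ [x]) (List.ofFn f')) * _ = _
          ring
        rw [Finset.sum_congr rfl fun f' _ => e1 f', ← Finset.mul_sum]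
        congr 1
        have e2 : ∑ f' : Fin k → A1 × A2,
            hp2 ρ σ (h ++ [x]) (List.ofFn f')
              * (u x.1 x.2 + ∑ t : Fin k, u (f' t).1 (f' t).2)
            = u x.1 x.2 * (∑ f' : Fin k → A1 × A2, hp2 ρ σ (h ++ [x]) (List.ofFn f'))
              + ∑ f' : Fin k → A1 × A2, hp2 ρ σ (h ++ [x]) (List.ofFn f')
                  * ∑ t : Fin k, u (f' t).1 (f' t).2 := by
          rw [Finset.mul_sum, ← Finset.sum_add_distrib]
          exact Finset.sum_congr rfl fun f' _ => by ring
        rw [e2, hsum1, mul_one, ← ih]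
      rw [Finset.sum_congr rfl fun x _ => step x, Fintype.sum_prod_type]
      rfl
  -- put it together
  have havg : avgPay2 n u ρ σ = expSum u ρ σ n [] / n := by
    unfold avgPay2
    rw [hexpeq n [], Finset.sum_div]
    exact Finset.sum_congr rfl fun f _ => (mul_div_assoc _ _ _).symm
  have hS : supS σ n [] ≤ (1 - ε) * β * n := by
    have : supS σ n [] = repEnt2 n σ := rfl
    rw [this]
    exact hent
  have hn' : (0:ℝ) < (n : ℝ) := by
    have : (1:ℝ) ≤ (n : ℝ) := by exact_mod_cast hn
    linarith
  rw [havg, le_div_iff₀ hn']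
  have h7 : supS σ n [] / γ ≤ (1 - ε) / (1 - ε / 2) * n := by
    rw [div_le_iff₀ hγ]
    have heq : (1 - ε) / (1 - ε / 2) * (n : ℝ) * γ = (1 - ε) * β * n := by
      rw [hγdef]
      linear_combination ((n : ℝ) * β) * div_mul_cancel₀ (1 - ε) (ne_of_gt hε2)
    rw [heq]
    exact hS
  have hmain := main n []
  have h8 := mul_le_mul_of_nonneg_left h7 hc.le
  nlinarith [hmain]
end
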